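/- Let G be any finite simple graph on vertex set {1,…,n} with adjacency matrix A, let σ ∈ {−1,+1}^n, and let ℓ ≥ 0. (a) If the subgraph of G induced on the ball {j : d_G(i,j) ≤ ℓ} around a vertex i is a tree, then for every m ≤ ℓ, (B^{(m)}e)_i = S_m(i) and (B^{(m)}σ)_i = D_m(i). (b) If the subgraph induced on that ball contains at most one cycle, then for every m ≤ ℓ, |(B^{(m)}σ)_i| ≤ (B^{(m)}e)_i ≤ 2·Σ_{t=0}^{m} S_t(i). -/

import Mathlib

/-!
A self-avoiding walk of length `m ≤ ℓ` from `i` stays in the ball of radius `ℓ` around `i`, and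
`B⁽ᵐ⁾ᵢⱼ` counts the paths of length `m` from `i` to `j`. If the ball induces a tree, the only
such path is the geodesic, so there is one exactly when `d(i, j) = m`. If the ball has no more
edges than vertices, then, being connected, it becomes a tree after deleting an edge `e` of a
cycle. A path avoiding `e`, or crossing `e` in a given direction, is then unique, and no two
paths cross `e` in opposite directions; so at most two paths join `i` to each `j` with
`d(i, j) ≤ m`.
-/

open MeasureTheory ProbabilityTheory Finset Filter Matrix

noncomputable section

/-- A configuration of the stochastic block model: a vector of spins (in `ℤ`) and a
family of edge indicators. -/
abbrev Config (n : ℕ) := (Fin n → ℤ) × (Fin n → Fin n → Bool)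

instance (n : ℕ) : MeasurableSpace (Config n) := ⊤

/-- The probability of an edge between `i` and `j`, given the spins. -/
def edgeP (a b : ℝ) (n : ℕ) (σ : Fin n → ℤ) (i j : Fin n) : ℝ :=
  if σ i = σ j then a / n else b / n

/-- The probability weight of a configuration: spins are i.i.d. uniform on `{-1,1}`,
and conditionally on the spins, edges `{i,j}`, `i < j`, are present independently with
probability `a/n` (equal spins) or `b/n` (unequal spins); the indicator family is
required to be symmetric with empty diagonal. -/
def sbmWeight (a b : ℝ) (n : ℕ) (ω : Config n) : ℝ :=
  if (∀ i, ω.1 i = 1 ∨ ω.1 i = -1) ∧ (∀ i j, ω.2 i j = ω.2 j i) ∧ (∀ i, ω.2 i i = false) then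
    (1 / 2) ^ n *
      ∏ i, ∏ j,
        (if i < j then
          (if ω.2 i j then edgeP a b n ω.1 i j else 1 - edgeP a b n ω.1 i j) else 1)
  else 0

/-- The law of the stochastic block model with parameters `a`, `b` on `n` nodes. -/
def sbm (a b : ℝ) (n : ℕ) : Measure (Config n) :=
  Measure.count.withDensity fun ω => ENNReal.ofReal (sbmWeight a b n ω)

/-- The (symmetric) adjacency matrix of a configuration. -/
def adjM (n : ℕ) (ω : Config n) : Matrix (Fin n) (Fin n) ℝ :=
  Matrix.of fun i j => if ω.2 i j ∧ ω.2 j i then 1 else 0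

/-- The spin vector of a configuration, as a real vector. -/
def spinVec (n : ℕ) (ω : Config n) : Fin n → ℝ := fun i => (ω.1 i : ℝ)

/-- The random graph of a configuration. -/
def graphOf (n : ℕ) (ω : Config n) : SimpleGraph (Fin n) where
  Adj i j := i ≠ j ∧ ω.2 i j ∧ ω.2 j i
  symm := ⟨fun i j h => ⟨h.1.symm, h.2.2, h.2.1⟩⟩
  loopless := ⟨fun i h => h.1 rfl⟩

/-- `Bmat n ℓ A i j` counts (with matrix weights) the self-avoiding paths of length `ℓ`
from `i` to `j`: it is the sum over sequences `i = p 0, p 1, …, p ℓ = j` of `ℓ+1`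
distinct nodes of the product of the entries of `A` along the path. -/
def Bmat (n ℓ : ℕ) (A : Matrix (Fin n) (Fin n) ℝ) : Matrix (Fin n) (Fin n) ℝ :=
  Matrix.of fun i j =>
    ∑ p : Fin (ℓ + 1) → Fin n,
      if p 0 = i ∧ p (Fin.last ℓ) = j ∧ Function.Injective p then
        ∏ t : Fin ℓ, A (p t.castSucc) (p t.succ)
      else 0

/-- Euclidean norm of a vector. -/
def vnorm {n : ℕ} (x : Fin n → ℝ) : ℝ := Real.sqrt (∑ i, x i ^ 2)

/-- `ℓ = ⌊c log n⌋`. -/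
def pathLen (c : ℝ) (n : ℕ) : ℕ := ⌊c * Real.log n⌋₊

/-- number of nodes at graph distance exactly `t` from `i`. -/
def Sg {n : ℕ} (G : SimpleGraph (Fin n)) (i : Fin n) (t : ℕ) : ℝ :=
  ∑ j, if G.edist i j = (t : ℕ∞) then 1 else 0

/-- sum of the spins of the nodes at graph distance exactly `t` from `i`. -/
def Dg {n : ℕ} (G : SimpleGraph (Fin n)) (σ : Fin n → ℤ) (i : Fin n) (t : ℕ) : ℝ :=
  ∑ j, if G.edist i j = (t : ℕ∞) then (σ j : ℝ) else 0

namespace SimpleGraph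

variable {V : Type*} {G : SimpleGraph V} {s : Set V} {u v a b : V}

namespace Walk

def ofFn : {m : ℕ} → (p : Fin (m + 1) → V) →
    (∀ t : Fin m, G.Adj (p t.castSucc) (p t.succ)) → G.Walk (p 0) (p (Fin.last m))
  | 0, _, _ => nil
  | _ + 1, p, h => cons (h 0) (ofFn (Fin.tail p) fun t => h t.succ)

@[simp] lemma length_ofFn : ∀ {m : ℕ} (p : Fin (m + 1) → V) (h), (ofFn (G := G) p h).length = m
  | 0, _, _ => rfl
  | _ + 1, p, _ => congrArg (· + 1) (length_ofFn (Fin.tail p) _)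

lemma getVert_ofFn : ∀ {m : ℕ} (p : Fin (m + 1) → V) (h) (t : Fin (m + 1)),
    (ofFn (G := G) p h).getVert t = p t
  | 0, p, _, t => by rw [Fin.fin_one_eq_zero t]; rfl
  | _ + 1, p, _, t => by
    cases t using Fin.cases with
    | zero => exact getVert_zero _
    | succ s => exact getVert_ofFn (Fin.tail p) _ s

lemma isPath_ofFn {m : ℕ} {p : Fin (m + 1) → V} (h : ∀ t : Fin m, G.Adj (p t.castSucc) (p t.succ))
    (hp : p.Injective) : (ofFn p h).IsPath := by
  rw [← IsPath.getVert_injOn_iff, length_ofFn]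
  intro s hs t ht hst
  exact congrArg Fin.val <| hp <| (getVert_ofFn p h ⟨s, Nat.lt_succ_of_le hs⟩).symm.trans <|
    hst.trans (getVert_ofFn p h ⟨t, Nat.lt_succ_of_le ht⟩)

lemma exists_eq_append_cons_of_mem_darts {d : G.Dart} :
    ∀ {u v : V} {p : G.Walk u v}, d ∈ p.darts →
      ∃ (q : G.Walk u d.fst) (r : G.Walk d.snd v), p = q.append (cons d.adj r)
  | _, _, nil, hd => by simp at hd
  | _, _, cons h p, hd => by
    rw [darts_cons, List.mem_cons] at hd
    rcases hd with rfl | hd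
    · exact ⟨nil, p, rfl⟩
    · obtain ⟨q, r, rfl⟩ := exists_eq_append_cons_of_mem_darts hd
      exact ⟨cons h q, r, rfl⟩

lemma IsPath.notMem_edges_of_append_cons {q : G.Walk u a} {h : G.Adj a b} {r : G.Walk b v}
    (hp : (q.append (cons h r)).IsPath) : s(a, b) ∉ q.edges ∧ s(a, b) ∉ r.edges := by
  have hnd := hp.isTrail.edges_nodup
  rw [edges_append, edges_cons, List.nodup_append, List.nodup_cons] at hnd
  exact ⟨fun he => hnd.2.2 _ he _ List.mem_cons_self rfl, hnd.2.1.1⟩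

lemma IsPath.disjoint_support_of_append_cons {q : G.Walk u a} {h : G.Adj a b}
    {r : G.Walk b v} (hp : (q.append (cons h r)).IsPath) : q.support.Disjoint r.support := by
  have hnd := hp.support_nodup
  rw [support_append, support_cons, List.tail_cons, List.nodup_append] at hnd
  exact fun x hq hr => hnd.2.2 x hq x hr rfl

lemma edist_le_of_mem_support (p : G.Walk u v) {x : V} (hx : x ∈ p.support) :
    G.edist u x ≤ p.length := by
  classical
  exact (edist_le (p.takeUntil x hx)).trans (Nat.cast_le.mpr (p.length_takeUntil_le_length hx))

lemma IsPath.induce {p : G.Walk u v} (hp : p.IsPath) (hs : ∀ x ∈ p.support, x ∈ s) :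
    (p.induce s hs).IsPath :=
  IsPath.of_map (f := (Embedding.induce s).toHom) (by rwa [map_induce])

lemma eq_of_induce_eq {p q : G.Walk u v} (hp : ∀ x ∈ p.support, x ∈ s)
    (hq : ∀ x ∈ q.support, x ∈ s) (h : p.induce s hp = q.induce s hq) : p = q := by
  simpa using congrArg (Walk.map (Embedding.induce s).toHom) h

section DeleteEdge

variable {e : Sym2 V}

lemma IsPath.eq_of_notMem_edges (hT : (G.deleteEdges {e}).IsAcyclic) {p q : G.Walk u v}
    (hp : p.IsPath) (hq : q.IsPath) (hpe : e ∉ p.edges) (hqe : e ∉ q.edges) : p = q := by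
  have := (hT.subsingleton_path u v).elim
    ⟨_, IsPath.toDeleteEdges G {e} hp (by rintro f hf rfl; exact hpe hf)⟩
    ⟨_, IsPath.toDeleteEdges G {e} hq (by rintro f hf rfl; exact hqe hf)⟩
  exact ext_support (by simpa using congrArg (·.val.support) this)

lemma IsPath.eq_of_append_cons (hT : (G.deleteEdges {s(a, b)}).IsAcyclic)
    {q₁ q₂ : G.Walk u a} {r₁ r₂ : G.Walk b v} {h₁ h₂ : G.Adj a b}
    (hp₁ : (q₁.append (cons h₁ r₁)).IsPath) (hp₂ : (q₂.append (cons h₂ r₂)).IsPath) :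
    q₁.append (cons h₁ r₁) = q₂.append (cons h₂ r₂) := by
  obtain ⟨hq₁, hr₁⟩ := hp₁.notMem_edges_of_append_cons
  obtain ⟨hq₂, hr₂⟩ := hp₂.notMem_edges_of_append_cons
  rw [hp₁.of_append_left.eq_of_notMem_edges hT hp₂.of_append_left hq₁ hq₂,
    hp₁.of_append_right.of_cons.eq_of_notMem_edges hT hp₂.of_append_right.of_cons hr₁ hr₂]

lemma mem_edges_of_notMem_edges (hT : (G.deleteEdges {e}).IsAcyclic) (hab : G.Adj a b)
    (he : s(a, b) ≠ e) (p : G.Walk a b) (hpe : e ∉ p.edges) : s(a, b) ∈ p.edges := by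
  classical
  have := (bypass_isPath p).eq_of_notMem_edges hT hab.isPath_toWalk
    (fun h => hpe (p.edges_bypass_subset_edges h)) (by simpa [Adj.toWalk] using he.symm)
  exact p.edges_bypass_subset_edges (by simp [this])

lemma IsPath.not_isPath_append_cons_swap (hT : (G.deleteEdges {s(a, b)}).IsAcyclic)
    {A : G.Walk u a} {B : G.Walk b v} {C : G.Walk u b} {D : G.Walk a v}
    {hab : G.Adj a b} {hba : G.Adj b a} (hp : (A.append (cons hab B)).IsPath) :
    ¬ (C.append (cons hba D)).IsPath := by
  classical
  intro hq
  obtain ⟨hA, hB⟩ := hp.notMem_edges_of_append_cons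
  obtain ⟨hC, hD⟩ := hq.notMem_edges_of_append_cons
  rw [Sym2.eq_swap] at hC hD
  have hAB := hp.disjoint_support_of_append_cons
  have hCD := hq.disjoint_support_of_append_cons
  have hAD : s(a, b) ∉ (A.append D).edges := by simp [hA, hD]
  have hCB : s(a, b) ∉ (C.append B).edges := by simp [hC, hB]
  have hρ := (bypass_isPath _).eq_of_notMem_edges hT (bypass_isPath _)
    (fun h => hAD (edges_bypass_subset_edges _ h)) (fun h => hCB (edges_bypass_subset_edges _ h))
  -- The path `ρ` avoiding `ab` runs inside `A ∪ D` and inside `C ∪ B`, so it leaves `A ∩ C`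
  -- along an edge `zz'` with `z' ∈ B ∩ D`.
  obtain ⟨d, hdρ, hz, hz'⟩ := (A.append D).bypass.exists_boundary_dart
    {z | z ∈ A.support ∧ z ∈ C.support} ⟨A.start_mem_support, C.start_mem_support⟩
    (fun h => hAB h.1 B.end_mem_support)
  have hz'ρ := (A.append D).bypass.dart_snd_mem_support_of_mem_darts hdρ
  have hz'AD := (mem_support_append_iff _ _).mp <|
    (A.append D).support_bypass_subset_support hz'ρ
  have hz'CB := (mem_support_append_iff _ _).mp <|
    (C.append B).support_bypass_subset_support (hρ ▸ hz'ρ)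
  have hz'B : d.snd ∈ B.support :=
    hz'CB.resolve_left fun hC => hCD hC (hz'AD.resolve_left fun hA => hz' ⟨hA, hC⟩)
  have hz'D : d.snd ∈ D.support := hz'AD.resolve_left fun hA => hAB hA hz'B
  have hne : s(d.fst, d.snd) ≠ s(a, b) := fun h => by
    apply hAD (edges_bypass_subset_edges _ _)
    rw [← h, edges_eq_map_darts]
    exact List.mem_map_of_mem hdρ
  -- The walk `z → a → z'` along `A` and `D` avoids `ab`, so it uses the edge `zz'`;
  -- hence `z' ∈ A` or `z ∈ D`.
  have hzz' := mem_edges_of_notMem_edges hT d.adj hne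
    ((A.dropUntil d.fst hz.1).append (D.takeUntil d.snd hz'D)) <| by
      simp only [edges_append, List.mem_append, not_or]
      exact ⟨fun h => hA (A.edges_dropUntil_subset_edges _ h),
        fun h => hD (D.edges_takeUntil_subset_edges _ h)⟩
  rw [edges_append, List.mem_append] at hzz'
  rcases hzz' with h | h
  · exact hAB ((A.edges_dropUntil_subset_edges _ h) |> A.snd_mem_support_of_mem_edges) hz'B
  · exact hCD hz.2 ((D.edges_takeUntil_subset_edges _ h) |> D.fst_mem_support_of_mem_edges)

lemma IsPath.eq_of_mem_edges (hT : (G.deleteEdges {e}).IsAcyclic) {p q : G.Walk u v}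
    (hp : p.IsPath) (hq : q.IsPath) (hpe : e ∈ p.edges) (hqe : e ∈ q.edges) : p = q := by
  rw [edges_eq_map_darts, List.mem_map] at hpe hqe
  obtain ⟨d, hd, rfl⟩ := hpe
  obtain ⟨d', hd', hdd'⟩ := hqe
  obtain ⟨A, B, rfl⟩ := exists_eq_append_cons_of_mem_darts hd
  obtain ⟨C, D, rfl⟩ := exists_eq_append_cons_of_mem_darts hd'
  rcases (dart_edge_eq_iff d' d).mp hdd' with rfl | rfl
  · exact hp.eq_of_append_cons hT hq
  · exact (hp.not_isPath_append_cons_swap hT hq).elim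

end DeleteEdge

end Walk

lemma ncard_setOf_isPath_length_eq (m : ℕ) (u v : V) :
    {w : G.Walk u v | w.IsPath ∧ w.length = m}.ncard =
      {p : Fin (m + 1) → V | p 0 = u ∧ p (Fin.last m) = v ∧ p.Injective ∧
        ∀ t : Fin m, G.Adj (p t.castSucc) (p t.succ)}.ncard := by
  refine Set.ncard_congr (fun w _ t => w.getVert t) ?_ ?_ ?_
  · rintro w ⟨hw, rfl⟩
    refine ⟨w.getVert_zero, w.getVert_length, fun s t hst => Fin.ext ?_, fun t => ?_⟩
    · exact hw.getVert_injOn (by simp; omega) (by simp; omega) hst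
    · exact w.adj_getVert_succ (by simp)
  · rintro w w' ⟨-, hw⟩ ⟨-, hw'⟩ h
    exact Walk.ext_getVert_le_length (hw.trans hw'.symm) fun k hk => congrFun h ⟨k, by omega⟩
  · rintro p ⟨rfl, rfl, hinj, hadj⟩
    exact ⟨Walk.ofFn p hadj, ⟨Walk.isPath_ofFn hadj hinj, Walk.length_ofFn p hadj⟩,
      funext (Walk.getVert_ofFn p hadj)⟩

lemma Connected.exists_isAcyclic_deleteEdges [Finite V] (hG : G.Connected)
    (hE : G.edgeSet.ncard ≤ Nat.card V) (hcyc : ¬ G.IsAcyclic) :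
    ∃ e, (G.deleteEdges {e}).IsAcyclic := by
  simp only [IsAcyclic, not_forall, not_not] at hcyc
  obtain ⟨x, c, hc⟩ := hcyc
  cases c with
  | nil => exact (hc.not_nil Walk.Nil.nil).elim
  | @cons _ y _ hxy c =>
    have he : s(x, y) ∈ (Walk.cons hxy c).edges := by simp
    have hconn := hG.connected_delete_edge_of_not_isBridge fun hb =>
      hb.notMem_edges_of_isCycle hc he
    have hcard : (G.deleteEdges {s(x, y)}).edgeSet.ncard = G.edgeSet.ncard - 1 := by
      rw [edgeSet_deleteEdges, Set.ncard_sdiff_singleton_of_mem (G.mem_edgeSet.mpr hxy)]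
    have hpos : 0 < G.edgeSet.ncard :=
      (Set.ncard_pos (Set.toFinite _)).mpr ⟨_, G.mem_edgeSet.mpr hxy⟩
    have hlow := hconn.card_vert_le_card_edgeSet_add_one
    refine ⟨s(x, y), (isTree_iff_connected_and_card.mpr ⟨hconn, ?_⟩).isAcyclic⟩
    rw [Nat.card_coe_set_eq] at hlow ⊢
    omega

theorem Connected.eq_or_eq_or_eq_of_isPath [Finite V] (hG : G.Connected)
    (hE : G.edgeSet.ncard ≤ Nat.card V) {p₁ p₂ p₃ : G.Walk u v}
    (h₁ : p₁.IsPath) (h₂ : p₂.IsPath) (h₃ : p₃.IsPath) : p₁ = p₂ ∨ p₁ = p₃ ∨ p₂ = p₃ := by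
  by_cases hac : G.IsAcyclic
  · exact .inl <| congrArg Subtype.val <| (hac.subsingleton_path u v).elim ⟨p₁, h₁⟩ ⟨p₂, h₂⟩
  obtain ⟨e, hT⟩ := hG.exists_isAcyclic_deleteEdges hE hac
  have key : ∀ {p q : G.Walk u v}, p.IsPath → q.IsPath → (e ∈ p.edges ↔ e ∈ q.edges) →
      p = q := fun {p q} hp hq h => by
    by_cases hpe : e ∈ p.edges
    · exact hp.eq_of_mem_edges hT hq hpe (h.mp hpe)
    · exact hp.eq_of_notMem_edges hT hq hpe (mt h.mpr hpe)
  have : (e ∈ p₁.edges ↔ e ∈ p₂.edges) ∨ (e ∈ p₁.edges ↔ e ∈ p₃.edges) ∨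
      (e ∈ p₂.edges ↔ e ∈ p₃.edges) := by tauto
  rcases this with h | h | h
  exacts [.inl (key h₁ h₂ h), .inr (.inl (key h₁ h₃ h)), .inr (.inr (key h₂ h₃ h))]

lemma IsAcyclic.eq_of_forall_mem_support (hs : (G.induce s).IsAcyclic) {p q : G.Walk u v}
    (hp : p.IsPath) (hq : q.IsPath) (hps : ∀ x ∈ p.support, x ∈ s)
    (hqs : ∀ x ∈ q.support, x ∈ s) : p = q :=
  Walk.eq_of_induce_eq hps hqs <| congrArg Subtype.val <|
    (hs.subsingleton_path _ _).elim ⟨_, hp.induce hps⟩ ⟨_, hq.induce hqs⟩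

lemma Connected.eq_or_eq_or_eq_of_forall_mem_support [Finite s] (hs : (G.induce s).Connected)
    (hE : (G.induce s).edgeSet.ncard ≤ s.ncard) {p₁ p₂ p₃ : G.Walk u v}
    (h₁ : p₁.IsPath) (h₂ : p₂.IsPath) (h₃ : p₃.IsPath) (hp₁ : ∀ x ∈ p₁.support, x ∈ s)
    (hp₂ : ∀ x ∈ p₂.support, x ∈ s) (hp₃ : ∀ x ∈ p₃.support, x ∈ s) :
    p₁ = p₂ ∨ p₁ = p₃ ∨ p₂ = p₃ := by
  rcases hs.eq_or_eq_or_eq_of_isPath hE (h₁.induce hp₁) (h₂.induce hp₂) (h₃.induce hp₃)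
    with h | h | h
  exacts [.inl (Walk.eq_of_induce_eq _ _ h), .inr (.inl (Walk.eq_of_induce_eq _ _ h)),
    .inr (.inr (Walk.eq_of_induce_eq _ _ h))]

section Ball

variable {i j : V} {ℓ m : ℕ}

lemma Walk.mem_edist_le_of_mem_support {p : G.Walk i j} (hp : p.length ≤ ℓ) :
    ∀ x ∈ p.support, x ∈ {j | G.edist i j ≤ ℓ} :=
  fun _ hx => (p.edist_le_of_mem_support hx).trans (by exact_mod_cast hp)

lemma connected_induce_edist_le (i : V) (ℓ : ℕ) : (G.induce {j | G.edist i j ≤ ℓ}).Connected := by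
  rw [connected_iff_exists_forall_reachable]
  refine ⟨⟨i, by simp⟩, fun ⟨j, hj⟩ => ?_⟩
  obtain ⟨p, hp⟩ := exists_walk_of_edist_ne_top (ne_top_of_le_ne_top (ENat.natCast_ne_top ℓ) hj)
  have hpℓ : (p.length : ℕ∞) ≤ ℓ := hp ▸ hj
  exact ⟨p.induce _ (Walk.mem_edist_le_of_mem_support (by exact_mod_cast hpℓ))⟩

lemma ncard_setOf_isPath_length_eq_of_isAcyclic
    (hT : (G.induce {j | G.edist i j ≤ ℓ}).IsAcyclic) (hm : m ≤ ℓ) (j : V) :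
    {w : G.Walk i j | w.IsPath ∧ w.length = m}.ncard = if G.edist i j = m then 1 else 0 := by
  set S := {w : G.Walk i j | w.IsPath ∧ w.length = m}
  have huniq : ∀ w w' : G.Walk i j, w.IsPath → w'.IsPath → w.length ≤ ℓ → w'.length ≤ ℓ →
      w = w' := fun w w' hw hw' hwℓ hw'ℓ =>
    hT.eq_of_forall_mem_support hw hw' (Walk.mem_edist_le_of_mem_support hwℓ)
      (Walk.mem_edist_le_of_mem_support hw'ℓ)
  split_ifs with hd
  · obtain ⟨g, hg⟩ := exists_walk_of_edist_eq_coe hd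
    have hgp : g.IsPath := g.isPath_of_length_eq_dist (by simp [dist, hd, hg])
    rw [Set.ncard_eq_one]
    exact ⟨g, Set.eq_singleton_iff_unique_mem.mpr
      ⟨⟨hgp, hg⟩, fun w hw => huniq _ _ hw.1 hgp (hw.2 ▸ hm) (hg ▸ hm)⟩⟩
  · rw [Set.eq_empty_of_forall_notMem (s := S) ?_, Set.ncard_empty]
    rintro w ⟨hw, rfl⟩
    obtain ⟨g, hg, hgl⟩ := w.reachable.exists_path_of_dist
    obtain rfl := huniq w g hw hg hm ((hgl ▸ dist_le w).trans hm)
    exact hd (by rw [← w.reachable.coe_dist_eq_edist, hgl])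

lemma ncard_setOf_isPath_length_eq_le_of_ncard_edgeSet_le [Finite V]
    (hE : (G.induce {j | G.edist i j ≤ ℓ}).edgeSet.ncard ≤ {j | G.edist i j ≤ ℓ}.ncard)
    (hm : m ≤ ℓ) (j : V) :
    {w : G.Walk i j | w.IsPath ∧ w.length = m}.ncard ≤ if G.edist i j ≤ m then 2 else 0 := by
  set S := {w : G.Walk i j | w.IsPath ∧ w.length = m}
  split_ifs with hd
  · by_contra! h
    obtain ⟨p₁, ⟨h₁, hl₁⟩, p₂, ⟨h₂, hl₂⟩, p₃, ⟨h₃, hl₃⟩, h₁₂, h₁₃, h₂₃⟩ :=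
      (Set.two_lt_ncard (Set.finite_of_ncard_pos (by omega))).mp h
    rcases (connected_induce_edist_le i ℓ).eq_or_eq_or_eq_of_forall_mem_support hE h₁ h₂ h₃
      (Walk.mem_edist_le_of_mem_support (hl₁ ▸ hm)) (Walk.mem_edist_le_of_mem_support (hl₂ ▸ hm))
      (Walk.mem_edist_le_of_mem_support (hl₃ ▸ hm)) with h | h | h <;> contradiction
  · rw [Set.eq_empty_of_forall_notMem (s := S) ?_, Set.ncard_empty]
    rintro w ⟨-, rfl⟩
    exact hd (edist_le w)

end Ball

end SimpleGraph

open SimpleGraph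

lemma Bmat_adjMatrix_apply {n : ℕ} (G : SimpleGraph (Fin n)) [DecidableRel G.Adj] (m : ℕ)
    (i j : Fin n) :
    Bmat n m (G.adjMatrix ℝ) i j = {w : G.Walk i j | w.IsPath ∧ w.length = m}.ncard := by
  classical
  rw [ncard_setOf_isPath_length_eq, Set.ncard_eq_toFinset_card']
  simp only [Bmat, of_apply, adjMatrix_apply, prod_boole, mem_univ, true_implies,
    ← ite_and, sum_boole, Set.toFinset_ofPred, and_assoc]

lemma Bmat_adjMatrix_mulVec {n : ℕ} (G : SimpleGraph (Fin n)) [DecidableRel G.Adj] (m : ℕ)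
    (x : Fin n → ℝ) (i : Fin n) :
    (Bmat n m (G.adjMatrix ℝ)).mulVec x i =
      ∑ j, ({w : G.Walk i j | w.IsPath ∧ w.length = m}.ncard : ℝ) * x j := by
  simp only [mulVec, dotProduct, Bmat_adjMatrix_apply]

lemma sum_range_Sg {n : ℕ} (G : SimpleGraph (Fin n)) (i : Fin n) (m : ℕ) :
    ∑ t ∈ range (m + 1), Sg G i t = ∑ j, if G.edist i j ≤ m then 1 else 0 := by
  simp only [Sg]
  rw [sum_comm]
  refine sum_congr rfl fun j _ => ?_
  induction G.edist i j using ENat.recTopCoe with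
  | top => simp
  | coe k => simp [Nat.cast_inj, sum_ite_eq]

theorem neighborhood_path_counts
    (n ℓ : ℕ) (G : SimpleGraph (Fin n)) [DecidableRel G.Adj]
    (σ : Fin n → ℤ) (hσ : ∀ i, σ i = 1 ∨ σ i = -1) (i : Fin n) :
    ((G.induce {j | G.edist i j ≤ (ℓ : ℕ∞)}).IsTree →
      ∀ m : ℕ, m ≤ ℓ →
        (Bmat n m (G.adjMatrix ℝ)).mulVec (fun _ => 1) i = Sg G i m ∧
        (Bmat n m (G.adjMatrix ℝ)).mulVec (fun j => (σ j : ℝ)) i = Dg G σ i m) ∧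
    ((G.induce {j | G.edist i j ≤ (ℓ : ℕ∞)}).edgeSet.ncard ≤
        Set.ncard {j | G.edist i j ≤ (ℓ : ℕ∞)} →
      ∀ m : ℕ, m ≤ ℓ →
        |(Bmat n m (G.adjMatrix ℝ)).mulVec (fun j => (σ j : ℝ)) i| ≤
            (Bmat n m (G.adjMatrix ℝ)).mulVec (fun _ => 1) i ∧
          (Bmat n m (G.adjMatrix ℝ)).mulVec (fun _ => 1) i ≤
            2 * ∑ t ∈ Finset.range (m + 1), Sg G i t) := by
  refine ⟨fun hT m hm => ?_, fun hE m hm => ?_⟩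
  · simp [Bmat_adjMatrix_mulVec, Sg, Dg, ncard_setOf_isPath_length_eq_of_isAcyclic hT.isAcyclic hm]
  · have hN := ncard_setOf_isPath_length_eq_le_of_ncard_edgeSet_le hE hm
    rw [Bmat_adjMatrix_mulVec, Bmat_adjMatrix_mulVec, sum_range_Sg, mul_sum]
    constructor
    · refine (abs_sum_le_sum_abs _ _).trans (sum_le_sum fun j _ => ?_)
      rcases hσ j with h | h <;> simp [h]
    · refine sum_le_sum fun j _ => ?_
      have := hN j
      split_ifs at this ⊢ <;> simp_all

end
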